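/- arXiv:1702.08358 — 5 statements merged into one kernel-verified Lean document; each statement's English description precedes it below -/
import Mathlib

section
/- For a prime p with p ≡ 1 (mod 4), the number of blocks [x,y,z] (equivalence classes under changing the signs of two coordinates) of nonzero solutions (x,y,z) in (Z/pZ)^3 to x^2+y^2+z^2=xyz over F_p equals p(p+3)/4. -/
open Finset

set_option linter.unusedVariables false

section MarkoffAux
variable (p : ℕ) [Fact p.Prime]

lemma rc2 (hp : p % 4 = 1) : ringChar (ZMod p) ≠ 2 := by
  rw [ZMod.ringChar_zmod_n]; omega

lemma two_nz (hp : p % 4 = 1) : (2 : ZMod p) ≠ 0 := by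
  have h : ((2:ℕ) : ZMod p) = 0 ↔ p ∣ 2 := ZMod.natCast_eq_zero_iff 2 p
  intro h2
  have hd : p ∣ 2 := h.mp (by exact_mod_cast h2)
  have := (Nat.prime_dvd_prime_iff_eq (Fact.out) (by norm_num)).mp hd
  omega

lemma four_nz (hp : p % 4 = 1) : (4 : ZMod p) ≠ 0 := by
  have h2 := two_nz p hp
  have h : (4 : ZMod p) = 2 * 2 := by norm_num
  rw [h]; exact mul_ne_zero h2 h2

lemma chi_neg_one (hp : p % 4 = 1) : quadraticChar (ZMod p) (-1) = 1 := by
  have h : IsSquare (-1 : ZMod p) := (ZMod.exists_sq_eq_neg_one_iff (p := p)).mpr (by omega)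
  exact (quadraticChar_one_iff_isSquare (by simp)).mpr h

lemma sum_shift (hp : p % 4 = 1) (c e : ZMod p) (hc : c ≠ 0) :
    ∑ t : ZMod p, quadraticChar (ZMod p) (c * t + e) = 0 := by
  rw [← quadraticChar_sum_zero (rc2 p hp)]
  exact Fintype.sum_equiv ((Equiv.mulLeft₀ c hc).trans (Equiv.addRight e))
    (fun t => quadraticChar (ZMod p) (c * t + e)) _ (fun t => rfl)

lemma sum_quad (hp : p % 4 = 1) (a b : ZMod p) (hb : b ≠ 0) :
    ∑ t : ZMod p, quadraticChar (ZMod p) (t * (a * t + b)) = - quadraticChar (ZMod p) a := by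
  set χ := quadraticChar (ZMod p) with hχ
  have key : ∀ t : ZMod p, χ (t * (a * t + b)) =
      if t = 0 then 0 else χ (a + b * t⁻¹) := by
    intro t
    by_cases ht : t = 0
    · simp [ht, hχ]
    · rw [if_neg ht]
      have h1 : t * (a * t + b) = t ^ 2 * (a + b * t⁻¹) := by
        field_simp
      rw [h1, map_mul, quadraticChar_sq_one' ht, one_mul]
  simp_rw [key]
  have hfinv : Function.Involutive (fun t : ZMod p => b * t⁻¹) := by
    intro t
    simp only [mul_inv_rev, inv_inv]
    rw [mul_comm t b⁻¹, ← mul_assoc, mul_inv_cancel₀ hb, one_mul]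
  have hsum := Fintype.sum_bijective (fun t : ZMod p => b * t⁻¹) hfinv.bijective
    (fun t => if t = 0 then 0 else χ (a + b * t⁻¹))
    (fun s => if s = 0 then 0 else χ (a + s))
    (by
      intro t
      by_cases ht : t = 0
      · simp [ht]
      · simp only [if_neg ht, if_neg (by simp [ht, hb] : ¬ b * t⁻¹ = 0)])
  rw [hsum]
  have h2 : ∀ s : ZMod p, (if s = 0 then 0 else χ (a + s)) =
      χ (a + s) - (if s = 0 then χ (a + s) else 0) := by
    intro s; split <;> simp
  simp_rw [h2]
  rw [Finset.sum_sub_distrib, Finset.sum_ite_eq' Finset.univ 0 (fun s => χ (a + s))]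
  have h3 : ∑ s : ZMod p, χ (a + s) = 0 := by
    have := sum_shift p hp 1 a (one_ne_zero)
    simp_rw [one_mul] at this
    rw [← this]
    exact Fintype.sum_congr _ _ (fun s => by rw [add_comm])
  simp [h3]

lemma card_sqrts (hp : p % 4 = 1) (t : ZMod p) :
    ((Finset.univ.filter fun z : ZMod p => z ^ 2 = t).card : ℤ) =
      quadraticChar (ZMod p) t + 1 := by
  have h := quadraticChar_card_sqrts (rc2 p hp) t
  rw [← h]
  congr 1
  rw [Set.toFinset_setOf]

lemma sum_sq (hp : p % 4 = 1) (f : ZMod p → ℤ) :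
    ∑ z : ZMod p, f (z ^ 2) = ∑ t : ZMod p, (quadraticChar (ZMod p) t + 1) * f t := by
  rw [← Finset.sum_fiberwise' Finset.univ (fun z : ZMod p => z ^ 2) f]
  refine Finset.sum_congr rfl (fun t _ => ?_)
  rw [Finset.sum_const, ← card_sqrts p hp t]
  simp [mul_comm]

lemma sum_z (hp : p % 4 = 1) (y : ZMod p) :
    ∑ z : ZMod p, quadraticChar (ZMod p) ((y ^ 2 - 4) * z ^ 2 - 4 * y ^ 2) =
      if y = 0 then (p : ℤ) - 1
      else if y = 2 ∨ y = -2 then (p : ℤ)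
      else - quadraticChar (ZMod p) (y ^ 2 - 4) := by
  set χ := quadraticChar (ZMod p) with hχ
  by_cases hy0 : y = 0
  · rw [if_pos hy0]
    subst hy0
    have : ∀ z : ZMod p, χ ((0 ^ 2 - 4) * z ^ 2 - 4 * 0 ^ 2) = χ (-1) * χ (2 * z) ^ 2 := by
      intro z
      have h : ((0:ZMod p) ^ 2 - 4) * z ^ 2 - 4 * 0 ^ 2 = -1 * (2 * z) ^ 2 := by ring
      rw [h, map_mul, map_pow]
    simp_rw [this, (show χ (-1) = 1 from chi_neg_one p hp), one_mul]
    have h2 : ∀ z : ZMod p, χ (2 * z) ^ 2 = if z = 0 then 0 else 1 := by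
      intro z
      by_cases hz : z = 0
      · simp [hz, hχ]
      · rw [if_neg hz]
        exact quadraticChar_sq_one (mul_ne_zero (two_nz p hp) hz)
    simp_rw [h2]
    have h3 : ∀ x : ZMod p, (if x = 0 then (0:ℤ) else 1) = 1 - (if x = 0 then 1 else 0) := by
      intro x; split <;> simp
    simp_rw [h3]
    rw [Finset.sum_sub_distrib, Finset.sum_const,
      Finset.sum_ite_eq' Finset.univ (0 : ZMod p) (fun _ => (1:ℤ))]
    simp [ZMod.card]
  · rw [if_neg hy0]
    by_cases hy2 : y = 2 ∨ y = -2
    · rw [if_pos hy2]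
      have hy4 : y ^ 2 - 4 = 0 := by
        rcases hy2 with h | h <;> subst h <;> ring
      have hval : ∀ z : ZMod p, χ ((y ^ 2 - 4) * z ^ 2 - 4 * y ^ 2) = 1 := by
        intro z
        have h : (y ^ 2 - 4) * z ^ 2 - 4 * y ^ 2 = -1 * (2 * y) ^ 2 := by
          rw [hy4]; ring
        rw [h, map_mul, map_pow, chi_neg_one p hp, one_mul,
          quadraticChar_sq_one (mul_ne_zero (two_nz p hp) hy0)]
      simp_rw [hval]
      simp
    · rw [if_neg hy2]
      have hc : y ^ 2 - 4 ≠ 0 := by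
        intro h
        have : (y - 2) * (y + 2) = 0 := by linear_combination h
        rcases mul_eq_zero.mp this with h' | h'
        · exact hy2 (Or.inl (by linear_combination h'))
        · exact hy2 (Or.inr (by linear_combination h'))
      have he : -4 * y ^ 2 ≠ 0 := by
        apply mul_ne_zero
        · exact neg_ne_zero.mpr (four_nz p hp)
        · exact pow_ne_zero 2 hy0
      have hrw : ∀ z : ZMod p, χ ((y ^ 2 - 4) * z ^ 2 - 4 * y ^ 2) =
          (fun t => χ ((y ^ 2 - 4) * t + -4 * y ^ 2)) (z ^ 2) := by
        intro z
        show χ ((y ^ 2 - 4) * z ^ 2 - 4 * y ^ 2) = χ ((y ^ 2 - 4) * z ^ 2 + -4 * y ^ 2)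
        congr 1; ring
      calc ∑ z : ZMod p, χ ((y ^ 2 - 4) * z ^ 2 - 4 * y ^ 2)
          = ∑ z : ZMod p, (fun t => χ ((y ^ 2 - 4) * t + -4 * y ^ 2)) (z ^ 2) :=
            Finset.sum_congr rfl (fun z _ => hrw z)
        _ = ∑ t : ZMod p, (χ t + 1) * χ ((y ^ 2 - 4) * t + -4 * y ^ 2) :=
            sum_sq p hp (fun t => χ ((y ^ 2 - 4) * t + -4 * y ^ 2))
        _ = ∑ t : ZMod p, (χ (t * ((y ^ 2 - 4) * t + -4 * y ^ 2)) +
              χ ((y ^ 2 - 4) * t + -4 * y ^ 2)) := by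
            refine Finset.sum_congr rfl (fun t _ => ?_)
            rw [add_mul, one_mul, ← map_mul]
        _ = - χ (y ^ 2 - 4) := by
            rw [Finset.sum_add_distrib, sum_quad p hp _ _ he, sum_shift p hp _ _ hc]
            ring

lemma card_x (hp : p % 4 = 1) (y z : ZMod p) :
    (Finset.univ.filter fun x : ZMod p => x ^ 2 + y ^ 2 + z ^ 2 = x * y * z).card =
    (Finset.univ.filter fun s : ZMod p => s ^ 2 = (y ^ 2 - 4) * z ^ 2 - 4 * y ^ 2).card := by
  have h2 := two_nz p hp
  apply Finset.card_bij' (fun x _ => 2 * x - y * z) (fun s _ => (s + y * z) * (2 : ZMod p)⁻¹)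
  · intro x hx
    simp only [Finset.mem_filter, Finset.mem_univ, true_and] at hx ⊢
    linear_combination (4 : ZMod p) * hx
  · intro s hs
    simp only [Finset.mem_filter, Finset.mem_univ, true_and] at hs ⊢
    field_simp
    linear_combination hs
  · intro x hx
    field_simp
    ring
  · intro s hs
    field_simp
    ring

lemma sum_chi_ym4 (hp : p % 4 = 1) :
    ∑ y : ZMod p, quadraticChar (ZMod p) (y ^ 2 - 4) = -1 := by
  set χ := quadraticChar (ZMod p) with hχ
  calc ∑ y : ZMod p, χ (y ^ 2 - 4)
      = ∑ y : ZMod p, (fun t => χ (t - 4)) (y ^ 2) := rfl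
    _ = ∑ t : ZMod p, (χ t + 1) * χ (t - 4) := sum_sq p hp (fun t => χ (t - 4))
    _ = ∑ t : ZMod p, (χ (t * (1 * t + -4)) + χ (1 * t + -4)) := by
        refine Finset.sum_congr rfl (fun t _ => ?_)
        rw [add_mul, one_mul, ← map_mul]
        congr 2 <;> ring
    _ = -1 := by
        rw [Finset.sum_add_distrib,
          sum_quad p hp 1 (-4) (neg_ne_zero.mpr (four_nz p hp)),
          sum_shift p hp 1 (-4) one_ne_zero, map_one]
        ring

lemma sum_y (hp : p % 4 = 1) :
    ∑ y : ZMod p, (if y = 0 then (p : ℤ) - 1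
      else if y = 2 ∨ y = -2 then (p : ℤ)
      else - quadraticChar (ZMod p) (y ^ 2 - 4)) = 3 * p + 1 := by
  set χ := quadraticChar (ZMod p) with hχ
  have h2 := two_nz p hp
  have h4 := four_nz p hp
  have h02 : (0 : ZMod p) ≠ 2 := fun h => h2 h.symm
  have h0m2 : (0 : ZMod p) ≠ -2 := fun h => h2 (by linear_combination h)
  have h2m2 : (2 : ZMod p) ≠ -2 := fun h => h4 (by linear_combination h)
  have hm20 : (-2 : ZMod p) ≠ 0 := fun h => h2 (by linear_combination -h)
  have key : ∀ y : ZMod p, (if y = 0 then (p : ℤ) - 1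
      else if y = 2 ∨ y = -2 then (p : ℤ)
      else - χ (y ^ 2 - 4)) =
      - χ (y ^ 2 - 4) + ((if y = 0 then (p:ℤ) else 0) +
        ((if y = 2 then (p:ℤ) else 0) + (if y = -2 then (p:ℤ) else 0))) := by
    intro y
    by_cases hy0 : y = 0
    · subst hy0
      rw [if_pos rfl, if_pos rfl, if_neg h02, if_neg h0m2]
      have : ((0:ZMod p) ^ 2 - 4) = -1 * 2 ^ 2 := by ring
      rw [this, map_mul, map_pow, chi_neg_one p hp, hχ, quadraticChar_sq_one h2]
      push_cast; ring
    · rw [if_neg hy0]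
      by_cases hy2 : y = 2 ∨ y = -2
      · rw [if_pos hy2]
        rcases hy2 with h | h <;> subst h
        · rw [if_neg (fun h => hy0 h), if_pos rfl, if_neg h2m2]
          have : ((2:ZMod p) ^ 2 - 4) = 0 := by ring
          rw [this]
          simp [hχ]
        · rw [if_neg hm20, if_neg (fun h => h2m2 h.symm), if_pos rfl]
          have : ((-2:ZMod p) ^ 2 - 4) = 0 := by ring
          rw [this]
          simp [hχ]
      · push_neg at hy2
        rw [if_neg (by tauto), if_neg hy0, if_neg hy2.1, if_neg hy2.2]
        ring
  simp_rw [key]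
  rw [Finset.sum_add_distrib, Finset.sum_add_distrib, Finset.sum_add_distrib,
    Finset.sum_neg_distrib, sum_chi_ym4 p hp,
    Finset.sum_ite_eq' Finset.univ (0 : ZMod p) (fun _ => (p:ℤ)),
    Finset.sum_ite_eq' Finset.univ (2 : ZMod p) (fun _ => (p:ℤ)),
    Finset.sum_ite_eq' Finset.univ (-2 : ZMod p) (fun _ => (p:ℤ))]
  simp
  ring
lemma total_card (hp : p % 4 = 1) :
    ((Finset.univ.filter fun v : ZMod p × ZMod p × ZMod p =>
      v.1 ^ 2 + v.2.1 ^ 2 + v.2.2 ^ 2 = v.1 * v.2.1 * v.2.2).card : ℤ) =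
      p ^ 2 + 3 * p + 1 := by
  set χ := quadraticChar (ZMod p) with hχ
  rw [Finset.card_filter]
  push_cast
  rw [Fintype.sum_prod_type]
  rw [Finset.sum_comm]
  have inner : ∀ yz : ZMod p × ZMod p,
      (∑ x : ZMod p, if x ^ 2 + yz.1 ^ 2 + yz.2 ^ 2 = x * yz.1 * yz.2 then (1:ℤ) else 0) =
      χ ((yz.1 ^ 2 - 4) * yz.2 ^ 2 - 4 * yz.1 ^ 2) + 1 := by
    intro yz
    rw [Finset.sum_boole, card_x p hp yz.1 yz.2]
    exact card_sqrts p hp _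
  calc (∑ yz : ZMod p × ZMod p, ∑ x : ZMod p,
        if x ^ 2 + yz.1 ^ 2 + yz.2 ^ 2 = x * yz.1 * yz.2 then (1:ℤ) else 0)
      = ∑ yz : ZMod p × ZMod p, (χ ((yz.1 ^ 2 - 4) * yz.2 ^ 2 - 4 * yz.1 ^ 2) + 1) :=
        Finset.sum_congr rfl (fun yz _ => inner yz)
    _ = (∑ yz : ZMod p × ZMod p, χ ((yz.1 ^ 2 - 4) * yz.2 ^ 2 - 4 * yz.1 ^ 2)) +
        (p : ℤ) ^ 2 := by
        rw [Finset.sum_add_distrib, Finset.sum_const, Finset.card_univ]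
        simp [ZMod.card]
        ring
    _ = (3 * p + 1) + (p:ℤ) ^ 2 := by
        congr 1
        rw [Fintype.sum_prod_type]
        calc (∑ y : ZMod p, ∑ z : ZMod p, χ ((y ^ 2 - 4) * z ^ 2 - 4 * y ^ 2))
            = ∑ y : ZMod p, (if y = 0 then (p : ℤ) - 1
                else if y = 2 ∨ y = -2 then (p : ℤ)
                else - χ (y ^ 2 - 4)) :=
              Finset.sum_congr rfl (fun y _ => sum_z p hp y)
          _ = 3 * p + 1 := sum_y p hp
    _ = (p:ℤ) ^ 2 + 3 * p + 1 := by ring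

end MarkoffAux


def mBlk (p : ℕ) (v : ZMod p × ZMod p × ZMod p) : Set (ZMod p × ZMod p × ZMod p) :=
  {v, (v.1, -v.2.1, -v.2.2), (-v.1, v.2.1, -v.2.2), (-v.1, -v.2.1, v.2.2)}

def mGood (p : ℕ) (v : ZMod p × ZMod p × ZMod p) : Prop :=
  v.1 ^ 2 + v.2.1 ^ 2 + v.2.2 ^ 2 = v.1 * v.2.1 * v.2.2 ∧ v ≠ (0, 0, 0)

section
variable (p : ℕ) [Fact p.Prime]


lemma neg_self_eq (hp : p % 4 = 1) (a : ZMod p) (h : -a = a) : a = 0 := by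
  have h2 : (2 : ZMod p) * a = 0 := by linear_combination -h
  rcases mul_eq_zero.mp h2 with h' | h'
  · exact absurd h' (two_nz p hp)
  · exact h'

lemma good_aux (hp : p % 4 = 1) (x y z : ZMod p) (hg : mGood p (x, y, z)) :
    (¬(y = 0 ∧ z = 0)) ∧ (¬(x = 0 ∧ z = 0)) ∧ (¬(x = 0 ∧ y = 0)) := by
  obtain ⟨heq, hne⟩ := hg
  simp only at heq
  refine ⟨?_, ?_, ?_⟩
  · rintro ⟨h1, h2⟩
    subst h1; subst h2
    have : x ^ 2 = 0 := by linear_combination heq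
    have hx : x = 0 := by
      exact pow_eq_zero_iff (n := 2) (by norm_num) |>.mp this
    exact hne (by simp [hx])
  · rintro ⟨h1, h2⟩
    subst h1; subst h2
    have : y ^ 2 = 0 := by linear_combination heq
    have hy : y = 0 := pow_eq_zero_iff (n := 2) (by norm_num) |>.mp this
    exact hne (by simp [hy])
  · rintro ⟨h1, h2⟩
    subst h1; subst h2
    have : z ^ 2 = 0 := by linear_combination heq
    have hz : z = 0 := pow_eq_zero_iff (n := 2) (by norm_num) |>.mp this
    exact hne (by simp [hz])

lemma blk_mem_good (hp : p % 4 = 1) (v w : ZMod p × ZMod p × ZMod p)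
    (hv : mGood p v) (hw : w ∈ mBlk p v) : mGood p w ∧ mBlk p w = mBlk p v := by
  obtain ⟨x, y, z⟩ := v
  obtain ⟨heq, hne⟩ := hv
  simp only at heq
  have hne' : ¬(x = 0 ∧ y = 0 ∧ z = 0) := by
    intro ⟨h1, h2, h3⟩; exact hne (by simp [h1, h2, h3])
  rcases hw with h | h | h | h <;> subst h
  · exact ⟨⟨heq, hne⟩, rfl⟩
  · refine ⟨⟨by simp only; linear_combination heq, ?_⟩, ?_⟩
    · simp only [ne_eq, Prod.mk.injEq, neg_eq_zero, not_and]
      intro h1 h2 h3; exact hne' ⟨h1, h2, h3⟩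
    · ext w
      simp only [mBlk, Set.mem_insert_iff, Set.mem_singleton_iff, neg_neg]
      tauto
  · refine ⟨⟨by simp only; linear_combination heq, ?_⟩, ?_⟩
    · simp only [ne_eq, Prod.mk.injEq, neg_eq_zero, not_and]
      intro h1 h2 h3; exact hne' ⟨h1, h2, h3⟩
    · ext w
      simp only [mBlk, Set.mem_insert_iff, Set.mem_singleton_iff, neg_neg]
      tauto
  · refine ⟨⟨by simp only; linear_combination heq, ?_⟩, ?_⟩
    · simp only [ne_eq, Prod.mk.injEq, neg_eq_zero, not_and]
      intro h1 h2 h3; exact hne' ⟨h1, h2, h3⟩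
    · ext w
      simp only [mBlk, Set.mem_insert_iff, Set.mem_singleton_iff, neg_neg]
      tauto

lemma fiber_eq_blk (hp : p % 4 = 1) (v : ZMod p × ZMod p × ZMod p) (hv : mGood p v) :
    {m : ZMod p × ZMod p × ZMod p | mGood p m ∧ mBlk p m = mBlk p v} = mBlk p v := by
  ext m
  constructor
  · rintro ⟨hg, hb⟩
    have : m ∈ mBlk p m := Set.mem_insert _ _
    rwa [hb] at this
  · intro hm
    exact blk_mem_good p hp v m hv hm

lemma blk_ncard (hp : p % 4 = 1) (v : ZMod p × ZMod p × ZMod p) (hv : mGood p v) :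
    Nat.card ↥(mBlk p v) = 4 := by
  obtain ⟨x, y, z⟩ := v
  obtain ⟨haux1, haux2, haux3⟩ := good_aux p hp x y z hv
  have hneg := neg_self_eq p hp
  -- pairwise distinctness
  have d01 : (x, y, z) ≠ (x, -y, -z) := by
    simp only [ne_eq, Prod.mk.injEq, not_and]
    intro _ h2 h3
    exact haux1 ⟨(hneg y h2.symm), (hneg z h3.symm)⟩
  have d02 : (x, y, z) ≠ (-x, y, -z) := by
    simp only [ne_eq, Prod.mk.injEq, not_and]
    intro h1 _ h3
    exact haux2 ⟨(hneg x h1.symm), (hneg z h3.symm)⟩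
  have d03 : (x, y, z) ≠ (-x, -y, z) := by
    simp only [ne_eq, Prod.mk.injEq, not_and]
    intro h1 h2 _
    exact haux3 ⟨(hneg x h1.symm), (hneg y h2.symm)⟩
  have d12 : (x, -y, -z) ≠ (-x, y, -z) := by
    simp only [ne_eq, Prod.mk.injEq, not_and]
    intro h1 h2 _
    exact haux3 ⟨(hneg x h1.symm), (hneg y h2)⟩
  have d13 : (x, -y, -z) ≠ (-x, -y, z) := by
    simp only [ne_eq, Prod.mk.injEq, not_and]
    intro h1 _ h3
    exact haux2 ⟨(hneg x h1.symm), (hneg z h3)⟩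
  have d23 : (-x, y, -z) ≠ (-x, -y, z) := by
    simp only [ne_eq, Prod.mk.injEq, not_and]
    intro _ h2 h3
    exact haux1 ⟨(hneg y h2.symm), (hneg z h3)⟩
  have n0 : (x,y,z) ∉ ({(x,-y,-z), (-x,y,-z), (-x,-y,z)} : Set (ZMod p × ZMod p × ZMod p)) := by
    simp only [Set.mem_insert_iff, Set.mem_singleton_iff]
    push_neg
    exact ⟨d01, d02, d03⟩
  have n1 : (x,-y,-z) ∉ ({(-x,y,-z), (-x,-y,z)} : Set (ZMod p × ZMod p × ZMod p)) := by
    simp only [Set.mem_insert_iff, Set.mem_singleton_iff]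
    push_neg
    exact ⟨d12, d13⟩
  rw [Nat.card_coe_set_eq]
  show ({(x,y,z), (x,-y,-z), (-x,y,-z), (-x,-y,z)} :
      Set (ZMod p × ZMod p × ZMod p)).ncard = 4
  rw [Set.ncard_insert_of_notMem n0, Set.ncard_insert_of_notMem n1, Set.ncard_pair d23]
end

theorem markoff_block_count_one_mod_four (p : ℕ) [Fact p.Prime] (hp : p % 4 = 1) :
    Nat.card {B : Set (ZMod p × ZMod p × ZMod p) |
      ∃ x y z : ZMod p, x ^ 2 + y ^ 2 + z ^ 2 = x * y * z ∧ (x, y, z) ≠ (0, 0, 0) ∧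
        B = {(x, y, z), (x, -y, -z), (-x, y, -z), (-x, -y, z)}} = p * (p + 3) / 4 := by
  classical
  set M := ZMod p × ZMod p × ZMod p with hM
  set S : Set (Set M) := {B : Set M |
      ∃ x y z : ZMod p, x ^ 2 + y ^ 2 + z ^ 2 = x * y * z ∧ (x, y, z) ≠ (0, 0, 0) ∧
        B = {(x, y, z), (x, -y, -z), (-x, y, -z), (-x, -y, z)}} with hS
  -- membership characterization
  have hSmem : ∀ B : Set M, B ∈ S ↔ ∃ v : M, mGood p v ∧ B = mBlk p v := by
    intro B
    constructor
    · rintro ⟨x, y, z, h1, h2, h3⟩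
      exact ⟨(x, y, z), ⟨h1, h2⟩, h3⟩
    · rintro ⟨⟨x, y, z⟩, hg, hB⟩
      exact ⟨x, y, z, hg.1, hg.2, hB⟩
  -- count of good triples
  have hcount : Nat.card {v : M // mGood p v} = p * (p + 3) := by
    have h1 : (Finset.univ.filter fun v : M =>
        v.1 ^ 2 + v.2.1 ^ 2 + v.2.2 ^ 2 = v.1 * v.2.1 * v.2.2).card = p ^ 2 + 3 * p + 1 := by
      have := total_card p hp
      exact_mod_cast this
    have h2 : (Finset.univ.filter fun v : M => mGood p v) =
        (Finset.univ.filter fun v : M =>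
          v.1 ^ 2 + v.2.1 ^ 2 + v.2.2 ^ 2 = v.1 * v.2.1 * v.2.2).erase (0, 0, 0) := by
      ext v
      rw [Finset.mem_filter]
      simp only [Finset.mem_filter, Finset.mem_erase, Finset.mem_univ, true_and, mGood]
      tauto
    have h0mem : ((0,0,0) : M) ∈ (Finset.univ.filter fun v : M =>
        v.1 ^ 2 + v.2.1 ^ 2 + v.2.2 ^ 2 = v.1 * v.2.1 * v.2.2) := by
      simp
    rw [Nat.card_eq_fintype_card, Fintype.card_subtype, h2,
      Finset.card_erase_of_mem h0mem, h1]
    ring_nf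
    omega
  -- the block map
  have hblkmem : ∀ w : {v : M // mGood p v}, mBlk p w.1 ∈ S := by
    intro ⟨⟨x, y, z⟩, hg⟩
    exact (hSmem _).mpr ⟨(x, y, z), hg, rfl⟩
  let g : {v : M // mGood p v} → ↥S := fun w => ⟨mBlk p w.1, hblkmem w⟩
  have hsurj : Function.Surjective g := by
    rintro ⟨B, hB⟩
    obtain ⟨v, hg, hBv⟩ := (hSmem B).mp hB
    exact ⟨⟨v, hg⟩, Subtype.ext hBv.symm⟩
  have : Finite ↥S := Finite.of_surjective g hsurj
  have fibcard : ∀ B : ↥S, Nat.card {w : {v : M // mGood p v} // g w = B} = 4 := by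
    intro B
    obtain ⟨v, hv⟩ := hsurj B
    have hBval : (B : Set M) = mBlk p v.1 := by rw [← hv]
    have e1 : {w : {v : M // mGood p v} // g w = B} ≃
        {m : M // mGood p m ∧ mBlk p m = mBlk p v.1} :=
      { toFun := fun w => ⟨w.1.1, w.1.2, by
          have := congrArg Subtype.val w.2
          simpa [g, hBval] using this⟩
        invFun := fun m => ⟨⟨m.1, m.2.1⟩, by
          apply Subtype.ext
          simpa [g, hBval] using m.2.2⟩
        left_inv := fun _ => by ext <;> rfl
        right_inv := fun _ => by ext <;> rfl }
    rw [Nat.card_congr e1]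
    calc Nat.card {m : M // mGood p m ∧ mBlk p m = mBlk p v.1}
        = Nat.card ↥{m : M | mGood p m ∧ mBlk p m = mBlk p v.1} := rfl
      _ = 4 := by
          rw [fiber_eq_blk p hp v.1 v.2]
          exact blk_ncard p hp v.1 v.2
  have hfin2 : Fintype ↥S := Fintype.ofFinite _
  have hmain : Nat.card {v : M // mGood p v} = 4 * Nat.card ↥S := by
    calc Nat.card {v : M // mGood p v}
        = Nat.card (Σ B : ↥S, {w : {v : M // mGood p v} // g w = B}) :=
          (Nat.card_congr (Equiv.sigmaFiberEquiv g)).symm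
      _ = ∑ B : ↥S, Nat.card {w : {v : M // mGood p v} // g w = B} := by
          rw [Nat.card_eq_fintype_card, Fintype.card_sigma]
          exact Finset.sum_congr rfl (fun B _ => (Nat.card_eq_fintype_card).symm)
      _ = ∑ B : ↥S, 4 := Finset.sum_congr rfl (fun B _ => fibcard B)
      _ = 4 * Nat.card ↥S := by
          rw [Finset.sum_const, Finset.card_univ, Nat.card_eq_fintype_card]
          ring
  rw [hcount] at hmain
  omega
end

section
/- In the group Γ generated by the coordinate permutations and the three Vieta involutions acting on triples, the subgroup generated by the three rotations rot_1, rot_2, rot_3 has index at most 2. -/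
/-- The Vieta involution `R₁ : (x,y,z) ↦ (yz−x, y, z)` as a permutation of `ℤ³`. -/
def vietaR1 : Equiv.Perm (ℤ × ℤ × ℤ) :=
  Function.Involutive.toPerm (fun v => (v.2.1 * v.2.2 - v.1, v.2.1, v.2.2))
    (by rintro ⟨x, y, z⟩; simp)

/-- The Vieta involution `R₂ : (x,y,z) ↦ (x, xz−y, z)`. -/
def vietaR2 : Equiv.Perm (ℤ × ℤ × ℤ) :=
  Function.Involutive.toPerm (fun v => (v.1, v.1 * v.2.2 - v.2.1, v.2.2))
    (by rintro ⟨x, y, z⟩; simp)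

/-- The Vieta involution `R₃ : (x,y,z) ↦ (x, y, xy−z)`. -/
def vietaR3 : Equiv.Perm (ℤ × ℤ × ℤ) :=
  Function.Involutive.toPerm (fun v => (v.1, v.2.1, v.1 * v.2.1 - v.2.2))
    (by rintro ⟨x, y, z⟩; simp)

/-- The coordinate transposition `τ₍₁₂₎ : (x,y,z) ↦ (y,x,z)`. -/
def tau12 : Equiv.Perm (ℤ × ℤ × ℤ) :=
  Function.Involutive.toPerm (fun v => (v.2.1, v.1, v.2.2))
    (by rintro ⟨x, y, z⟩; simp)

/-- The coordinate transposition `τ₍₁₃₎ : (x,y,z) ↦ (z,y,x)`. -/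
def tau13 : Equiv.Perm (ℤ × ℤ × ℤ) :=
  Function.Involutive.toPerm (fun v => (v.2.2, v.2.1, v.1))
    (by rintro ⟨x, y, z⟩; simp)

/-- The coordinate transposition `τ₍₂₃₎ : (x,y,z) ↦ (x,z,y)`. -/
def tau23 : Equiv.Perm (ℤ × ℤ × ℤ) :=
  Function.Involutive.toPerm (fun v => (v.1, v.2.2, v.2.1))
    (by rintro ⟨x, y, z⟩; simp)

/-- The Markoff group `Γ`, generated by the coordinate permutations and the
three Vieta involutions. -/
def markoffGamma : Subgroup (Equiv.Perm (ℤ × ℤ × ℤ)) :=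
  Subgroup.closure {tau12, tau13, tau23, vietaR1, vietaR2, vietaR3}

/-- The subgroup generated by the three rotations
`rot₁ = R₃ ∘ τ₍₂₃₎`, `rot₂ = R₁ ∘ τ₍₁₃₎`, `rot₃ = R₂ ∘ τ₍₁₂₎`. -/
def markoffH : Subgroup (Equiv.Perm (ℤ × ℤ × ℤ)) :=
  Subgroup.closure {vietaR3 * tau23, vietaR1 * tau13, vietaR2 * tau12}

section aux

lemma tau23_inv : tau23⁻¹ = tau23 := by
  apply Equiv.ext; rintro ⟨x, y, z⟩
  simp [tau23, Function.Involutive.toPerm, Equiv.Perm.inv_def]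

lemma tau23_sq : tau23 * tau23 = 1 := by
  apply Equiv.ext; rintro ⟨x, y, z⟩
  simp [tau23, Function.Involutive.toPerm, Equiv.Perm.mul_apply]

lemma t_t (c : Equiv.Perm (ℤ × ℤ × ℤ)) : tau23 * (tau23 * c) = c := by
  rw [← mul_assoc, tau23_sq, one_mul]

lemma hr1 : vietaR3 * tau23 ∈ markoffH :=
  Subgroup.subset_closure (by left; rfl)

lemma hr2 : vietaR1 * tau13 ∈ markoffH :=
  Subgroup.subset_closure (by right; left; rfl)

lemma hr3 : vietaR2 * tau12 ∈ markoffH :=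
  Subgroup.subset_closure (by right; right; rfl)

lemma eq1 : tau23 * (vietaR3 * tau23) * tau23⁻¹ = (vietaR3 * tau23)⁻¹ := by
  apply Equiv.ext; rintro ⟨x, y, z⟩
  simp [tau23, vietaR3, mul_inv_rev, Function.Involutive.toPerm,
    Equiv.Perm.inv_def, Equiv.Perm.mul_apply]

lemma eq2 : tau23 * (vietaR1 * tau13) * tau23⁻¹ =
    (vietaR1 * tau13) * (vietaR2 * tau12)⁻¹ * (vietaR3 * tau23)⁻¹ := by
  apply Equiv.ext; rintro ⟨x, y, z⟩
  simp [tau23, tau13, tau12, vietaR1, vietaR2, vietaR3, mul_inv_rev,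
    Function.Involutive.toPerm, Equiv.Perm.inv_def, Equiv.Perm.mul_apply]
  ring

lemma eq3 : tau23 * (vietaR2 * tau12) * tau23⁻¹ =
    (vietaR3 * tau23) * (vietaR2 * tau12)⁻¹ * (vietaR3 * tau23)⁻¹ := by
  apply Equiv.ext; rintro ⟨x, y, z⟩
  simp [tau23, tau12, vietaR2, vietaR3, mul_inv_rev,
    Function.Involutive.toPerm, Equiv.Perm.inv_def, Equiv.Perm.mul_apply]

/-- Conjugation by `tau23` preserves `markoffH`. -/
lemma conjT : ∀ h ∈ markoffH, tau23 * h * tau23⁻¹ ∈ markoffH := by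
  intro h hh
  induction hh using Subgroup.closure_induction with
  | mem s hs =>
    rcases hs with rfl | rfl | rfl
    · rw [eq1]; exact inv_mem hr1
    · rw [eq2]; exact mul_mem (mul_mem hr2 (inv_mem hr3)) (inv_mem hr1)
    · rw [eq3]; exact mul_mem (mul_mem hr1 (inv_mem hr3)) (inv_mem hr1)
  | one => simpa using one_mem markoffH
  | mul a b _ _ ha hb =>
    have : tau23 * (a * b) * tau23⁻¹ = (tau23 * a * tau23⁻¹) * (tau23 * b * tau23⁻¹) := by
      group
    rw [this]; exact mul_mem ha hb
  | inv a _ ha =>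
    have : tau23 * a⁻¹ * tau23⁻¹ = (tau23 * a * tau23⁻¹)⁻¹ := by group
    rw [this]; exact inv_mem ha

/-- Conjugation by `tau23` (self-inverse form). -/
lemma conjT' : ∀ h ∈ markoffH, tau23 * h * tau23 ∈ markoffH := by
  intro h hh
  have := conjT h hh
  rwa [tau23_inv] at this

-- coset identities: every generator of Γ times tau23 lies in H
lemma c12 : tau12 * tau23 = ((vietaR3 * tau23) * (vietaR2 * tau12))⁻¹ := by
  apply Equiv.ext; rintro ⟨x, y, z⟩
  simp [tau23, tau12, vietaR2, vietaR3, mul_inv_rev,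
    Function.Involutive.toPerm, Equiv.Perm.inv_def, Equiv.Perm.mul_apply]

lemma c13 : tau13 * tau23 = (vietaR3 * tau23) * (vietaR2 * tau12) := by
  apply Equiv.ext; rintro ⟨x, y, z⟩
  simp [tau23, tau13, tau12, vietaR2, vietaR3,
    Function.Involutive.toPerm, Equiv.Perm.mul_apply]

lemma cR1 : vietaR1 * tau23 = (vietaR1 * tau13) * ((vietaR3 * tau23) * (vietaR2 * tau12)) := by
  apply Equiv.ext; rintro ⟨x, y, z⟩
  simp [tau23, tau13, tau12, vietaR1, vietaR2, vietaR3,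
    Function.Involutive.toPerm, Equiv.Perm.mul_apply]

lemma cR2 : vietaR2 * tau23 = (vietaR3 * tau23)⁻¹ := by
  apply Equiv.ext; rintro ⟨x, y, z⟩
  simp [tau23, vietaR2, vietaR3, mul_inv_rev,
    Function.Involutive.toPerm, Equiv.Perm.inv_def, Equiv.Perm.mul_apply]

lemma mem_c12 : tau12 * tau23 ∈ markoffH := by
  rw [c12]; exact inv_mem (mul_mem hr1 hr3)

lemma mem_c13 : tau13 * tau23 ∈ markoffH := by
  rw [c13]; exact mul_mem hr1 hr3

lemma mem_cR1 : vietaR1 * tau23 ∈ markoffH := by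
  rw [cR1]; exact mul_mem hr2 (mul_mem hr1 hr3)

lemma mem_cR2 : vietaR2 * tau23 ∈ markoffH := by
  rw [cR2]; exact inv_mem hr1

lemma mem_c23 : tau23 * tau23 ∈ markoffH := by
  rw [tau23_sq]; exact one_mem _

/-- The union of `markoffH` and its coset by `tau23`, as a subgroup. -/
def markoffK : Subgroup (Equiv.Perm (ℤ × ℤ × ℤ)) where
  carrier := {g | g ∈ markoffH ∨ g * tau23 ∈ markoffH}
  one_mem' := Or.inl (one_mem _)
  mul_mem' := by
    rintro a b (ha | ha) (hb | hb)
    · exact Or.inl (mul_mem ha hb)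
    · right
      rw [mul_assoc]
      exact mul_mem ha hb
    · right
      have key : a * b * tau23 = (a * tau23) * (tau23 * b * tau23) := by
        simp only [mul_assoc, t_t]
      rw [key]
      exact mul_mem ha (conjT' b hb)
    · left
      have key : a * b = (a * tau23) * (tau23 * (b * tau23) * tau23) := by
        simp only [mul_assoc, t_t]
        rw [tau23_sq, mul_one]
      rw [key]
      exact mul_mem ha (conjT' _ hb)
  inv_mem' := by
    rintro a (ha | ha)
    · exact Or.inl (inv_mem ha)
    · right
      have h1 : tau23 * a⁻¹ ∈ markoffH := by
        have key : tau23 * a⁻¹ = (a * tau23)⁻¹ := by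
          rw [mul_inv_rev, tau23_inv]
        rw [key]
        exact inv_mem ha
      have key : a⁻¹ * tau23 = tau23 * (tau23 * a⁻¹) * tau23 := by
        simp only [← mul_assoc, tau23_sq, one_mul]
      rw [key]
      exact conjT' _ h1

lemma gamma_le_K : markoffGamma ≤ markoffK := by
  rw [markoffGamma, Subgroup.closure_le]
  rintro s (rfl | rfl | rfl | rfl | rfl | rfl)
  · exact Or.inr mem_c12
  · exact Or.inr mem_c13
  · exact Or.inr mem_c23
  · exact Or.inr mem_cR1
  · exact Or.inr mem_cR2
  · exact Or.inr hr1

lemma h_le_gamma : markoffH ≤ markoffGamma := by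
  rw [markoffH, Subgroup.closure_le]
  have g12 : tau12 ∈ markoffGamma := Subgroup.subset_closure (by simp [markoffGamma])
  have g13 : tau13 ∈ markoffGamma := Subgroup.subset_closure (by simp [markoffGamma])
  have g23 : tau23 ∈ markoffGamma := Subgroup.subset_closure (by simp [markoffGamma])
  have gR1 : vietaR1 ∈ markoffGamma := Subgroup.subset_closure (by simp [markoffGamma])
  have gR2 : vietaR2 ∈ markoffGamma := Subgroup.subset_closure (by simp [markoffGamma])
  have gR3 : vietaR3 ∈ markoffGamma := Subgroup.subset_closure (by simp [markoffGamma])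
  rintro s (rfl | rfl | rfl)
  · exact mul_mem gR3 g23
  · exact mul_mem gR1 g13
  · exact mul_mem gR2 g12

/-- Every element of `markoffK` normalizes `markoffH`. -/
lemma conj_mem_of_K : ∀ g ∈ markoffK, ∀ h ∈ markoffH, g * h * g⁻¹ ∈ markoffH := by
  rintro g (hg | hg) h hh
  · exact mul_mem (mul_mem hg hh) (inv_mem hg)
  · have key : g * h * g⁻¹ =
        (g * tau23) * (tau23 * h * tau23) * (g * tau23)⁻¹ := by
      simp only [mul_inv_rev, tau23_inv, mul_assoc, t_t]
    rw [key]
    exact mul_mem (mul_mem hg (conjT' h hh)) (inv_mem hg)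

end aux

theorem rotations_index_at_most_two :
    markoffH ≤ markoffGamma ∧
    (∀ g ∈ markoffGamma, ∀ h ∈ markoffH, g * h * g⁻¹ ∈ markoffH) ∧
    markoffH.relIndex markoffGamma ≤ 2 := by
  refine ⟨h_le_gamma, fun g hg => conj_mem_of_K g (gamma_le_K hg), ?_⟩
  rw [Subgroup.relIndex]
  set K := markoffH.subgroupOf markoffGamma with hK
  have ht23 : tau23 ∈ markoffGamma := Subgroup.subset_closure (by simp [markoffGamma])
  set t : markoffGamma := ⟨tau23, ht23⟩ with htdef
  have hsurj : Function.Surjective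
      (fun b : Bool => if b then ((t : markoffGamma) : markoffGamma ⧸ K)
        else ((1 : markoffGamma) : markoffGamma ⧸ K)) := by
    intro q
    induction q using Quotient.inductionOn' with
    | h b =>
      rcases gamma_le_K b.2 with hb | hb
      · refine ⟨false, ?_⟩
        simp only [if_neg Bool.false_ne_true]
        refine (QuotientGroup.eq).mpr ?_
        rw [Subgroup.mem_subgroupOf]
        simpa using hb
      · refine ⟨true, ?_⟩
        simp only [if_pos rfl]
        refine (QuotientGroup.eq).mpr ?_
        rw [Subgroup.mem_subgroupOf]
        have h1 : ((t⁻¹ * b : markoffGamma) : Equiv.Perm (ℤ × ℤ × ℤ)) = tau23⁻¹ * b := rfl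
        rw [h1, tau23_inv]
        have h2 : tau23 * (b : Equiv.Perm (ℤ × ℤ × ℤ)) =
            tau23 * ((b : Equiv.Perm (ℤ × ℤ × ℤ)) * tau23) * tau23 := by
          simp only [mul_assoc]
          rw [tau23_sq, mul_one]
        rw [h2]
        exact conjT' _ hb
  have hle := Nat.card_le_card_of_surjective _ hsurj
  simpa [Subgroup.index] using hle
end

section
/- Let p ≡ 3 (mod 4) be prime and i ∈ F_{p^2} with i^2 = −1. Every element of the norm-one subgroup H = {h : h^{p+1}=1} of F_{p^2}^* other than −i can be written as (2s + i(1−s^2))/(1+s^2) for some s ∈ F_p, and conversely every such expression lies in H. -/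
open Polynomial

theorem norm_one_subgroup_parametrization (p : ℕ) [Fact p.Prime] (hp : p % 4 = 3)
    (i : GaloisField p 2) (hi : i ^ 2 = -1) :
    {h : GaloisField p 2 | h ^ (p + 1) = 1} =
      {w : GaloisField p 2 | ∃ s : ZMod p,
        w = (2 * algebraMap (ZMod p) (GaloisField p 2) s +
              i * (1 - algebraMap (ZMod p) (GaloisField p 2) s ^ 2)) /
            (1 + algebraMap (ZMod p) (GaloisField p 2) s ^ 2)} ∪ {-i} := by
  classical
  set g : ZMod p →+* GaloisField p 2 := (algebraMap (ZMod p) (GaloisField p 2)) with hg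
  have hpprime : p.Prime := Fact.out
  have hp1 : 1 < p := hpprime.one_lt
  obtain ⟨k, hk⟩ : ∃ k, p = 4 * k + 3 := ⟨p / 4, by omega⟩
  have hi4 : i ^ 4 = 1 := by
    have h4 : i ^ 4 = (i ^ 2) ^ 2 := by ring
    rw [h4, hi]; ring
  have hip : i ^ p = -i := by
    have e1 : i ^ p = i ^ (4 * k + 2 + 1) := congrArg (fun n => i ^ n) (by omega)
    rw [e1, pow_succ, pow_add, pow_mul, hi4, hi]
    ring
  have hi0 : i ≠ 0 := by
    intro h0
    have h1 : (-1 : GaloisField p 2) = 0 := by rw [← hi, h0]; ring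
    rw [neg_eq_zero] at h1
    exact one_ne_zero h1
  -- fixed points of Frobenius lie in the prime field
  have key : ∀ x : GaloisField p 2, x ^ p = x → ∃ s : ZMod p, g s = x := by
    intro x hx
    by_contra hcon
    push_neg at hcon
    have hginj : Function.Injective g := g.injective
    have hxmem : x ∉ Finset.univ.image g := by
      simp only [Finset.mem_image, Finset.mem_univ, true_and, not_exists]
      exact fun s h => hcon s h
    have hsub : (insert x (Finset.univ.image g)).val ⊆
        (X ^ p - X : (GaloisField p 2)[X]).roots := by
      intro z hz
      rw [Finset.mem_val] at hz
      rw [mem_roots (FiniteField.X_pow_card_sub_X_ne_zero (GaloisField p 2) hp1)]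
      have hzp : z ^ p = z := by
        rcases Finset.mem_insert.mp hz with h | h
        · rw [h]; exact hx
        · obtain ⟨s, _, rfl⟩ := Finset.mem_image.mp h
          rw [← map_pow, ZMod.pow_card]
      simp [Polynomial.IsRoot, hzp]
    have hcard := Polynomial.card_le_degree_of_subset_roots hsub
    rw [FiniteField.X_pow_card_sub_X_natDegree_eq (GaloisField p 2) hp1,
      Finset.card_insert_of_notMem hxmem,
      Finset.card_image_of_injective _ hginj, Finset.card_univ, ZMod.card] at hcard
    omega
  -- denominator never vanishes
  have hden : ∀ s : ZMod p, (1 : GaloisField p 2) + g s ^ 2 ≠ 0 := by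
    intro s hs
    have h1 : g (1 + s ^ 2) = g 0 := by
      rw [map_add, map_pow, map_one, map_zero]; exact hs
    have h2 : (1 : ZMod p) + s ^ 2 = 0 := g.injective h1
    have h3 : IsSquare (-1 : ZMod p) := ⟨s, by linear_combination -h2⟩
    rw [ZMod.exists_sq_eq_neg_one_iff] at h3
    exact h3 hp
  ext h
  simp only [Set.mem_setOf_eq, Set.mem_union, Set.mem_singleton_iff]
  constructor
  · intro hh
    by_cases hne : h = -i
    · right; exact hne
    left
    have hh0 : h ≠ 0 := by
      intro h0; rw [h0, zero_pow (by omega)] at hh; exact one_ne_zero hh.symm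
    have hii : i * -i = 1 := by linear_combination -hi
    have h1 : 1 - h * i ≠ 0 := by
      intro h0
      apply hne
      have hmul : h * i = 1 := by linear_combination -h0
      calc h = h * (i * -i) := by rw [hii, mul_one]
        _ = h * i * -i := by ring
        _ = -i := by rw [hmul, one_mul]
    have hph : h ^ p * h = 1 := by rw [← pow_succ]; exact hh
    have h2 : h + i ≠ 0 := fun h0 => hne (by linear_combination h0)
    have hhp : h ^ p = 1 / h := by rw [eq_div_iff hh0]; exact hph
    have hd2 : (1 : GaloisField p 2) - h ^ p * -i ≠ 0 := by
      have he : (1 : GaloisField p 2) - h ^ p * -i = (h + i) / h := by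
        rw [hhp]; field_simp; ring
      rw [he]
      exact div_ne_zero h2 hh0
    set t : GaloisField p 2 := (h - i) / (1 - h * i) with ht
    have htp : t ^ p = t := by
      rw [ht, div_pow, sub_pow_char, sub_pow_char, one_pow, mul_pow, hip]
      rw [div_eq_div_iff hd2 h1]
      linear_combination (-2 * i) * hph + (h ^ p - h) * hi
    obtain ⟨s, hs⟩ := key t htp
    have hD : (1 : GaloisField p 2) + g s ^ 2 ≠ 0 := hden s
    refine ⟨s, ?_⟩
    rw [eq_div_iff hD, hs, ht]
    field_simp
    linear_combination ((h ^ 3 - h) + (1 - h ^ 2) * i + (-3*h*i^2 + 3*h^2*i + 3*h^2*i^3 - h^3*i^4 - 3*h^4*i - 2*h^4*i^3 + 3*h^5*i^2 + h^5*i^4 - h^6*i^3) + ((-3*h^2+3*h^4)*i + (3*h-3*h^5)*i^2 + (-3*h^2+2*h^4+h^6)*i^3 + (h^3-h^5)*i^4)) * hi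
  · rintro (⟨s, rfl⟩ | rfl)
    · set a : GaloisField p 2 := g s with ha
      have hD : (1 : GaloisField p 2) + a ^ 2 ≠ 0 := hden s
      have hap : a ^ p = a := by rw [ha, ← map_pow, ZMod.pow_card]
      have h2p : (2 : GaloisField p 2) ^ p = 2 := by
        have he : (2 : GaloisField p 2) = g 2 := (map_ofNat g 2).symm
        rw [he, ← map_pow, ZMod.pow_card]
      have hNp : (2 * a + i * (1 - a ^ 2)) ^ p = 2 * a - i * (1 - a ^ 2) := by
        rw [add_pow_char, mul_pow, mul_pow, sub_pow_char, one_pow, ← pow_mul,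
          show 2 * p = p * 2 by ring, pow_mul, hap, h2p, hip]
        ring
      have hDp : ((1 : GaloisField p 2) + a ^ 2) ^ p = 1 + a ^ 2 := by
        rw [add_pow_char, one_pow, ← pow_mul, show 2 * p = p * 2 by ring, pow_mul, hap]
      rw [pow_succ, div_pow, hNp, hDp, div_mul_div_comm,
        div_eq_one_iff_eq (mul_ne_zero hD hD)]
      linear_combination (-(1 - a ^ 2) ^ 2) * hi
    · have e1 : (-i) ^ (p + 1) = (-i) ^ (4 * (k + 1)) :=
        congrArg (fun n => (-i) ^ n) (by omega)
      have e2 : (-i) ^ 4 = i ^ 4 := by ring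
      rw [e1, pow_mul, e2, hi4, one_pow]
end

section
/- Let p ≡ 3 (mod 4) be prime, ω ∈ F_{p^2} with ω^{p+1} = 1 and ω ≠ ±1, and set y = ω + ω^{-1} (so y ∈ F_p and y ≠ ±2). Then ω is a square in the subgroup H = {h : h^{p+1}=1} if and only if y + 2 is a square in F_p. -/
theorem square_in_norm_one_subgroup_iff (p : ℕ) [Fact p.Prime] (hp : p % 4 = 3)
    (ω : GaloisField p 2) (hω : ω ^ (p + 1) = 1) (h1 : ω ≠ 1) (h2 : ω ≠ -1)
    (y : ZMod p) (hy : algebraMap (ZMod p) (GaloisField p 2) y = ω + ω⁻¹) :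
    (∃ h : GaloisField p 2, h ^ (p + 1) = 1 ∧ ω = h ^ 2) ↔ IsSquare (y + 2) := by
  have hprime : p.Prime := Fact.out
  have hp2 : 2 < p := by
    rcases Nat.lt_or_ge p 3 with h | h
    · interval_cases p <;> omega
    · omega
  have hω0 : ω ≠ 0 := by
    intro h; rw [h, zero_pow (by omega)] at hω; exact zero_ne_one hω
  have hinj : Function.Injective (algebraMap (ZMod p) (GaloisField p 2)) :=
    (algebraMap (ZMod p) (GaloisField p 2)).injective
  have key : (algebraMap (ZMod p) (GaloisField p 2)) (y + 2) = ω + ω⁻¹ + 2 := by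
    rw [map_add, hy, map_ofNat]
  constructor
  · rintro ⟨h, hh, rfl⟩
    have hh0 : h ≠ 0 := by
      intro hz; rw [hz, zero_pow (by omega)] at hh; exact zero_ne_one hh
    have hhp : h ^ p = h⁻¹ := by
      have h' : h ^ p * h = 1 := by rw [← pow_succ]; exact hh
      field_simp
      linear_combination h'
    have htp : (h + h⁻¹) ^ p = h + h⁻¹ := by
      rw [add_pow_char, hhp, inv_pow, hhp, inv_inv, add_comm]
    have ht0 : h + h⁻¹ ≠ 0 := by
      intro hz
      apply h2
      have hzz : h ^ 2 + 1 = 0 := by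
        field_simp at hz
        linear_combination hz
      linear_combination hzz
    have ht2 : (algebraMap (ZMod p) (GaloisField p 2)) (y + 2) = (h + h⁻¹) ^ 2 := by
      rw [key]
      field_simp
      ring
    have hy2 : y + 2 ≠ 0 := by
      intro hz
      rw [hz, map_zero] at ht2
      exact ht0 (pow_eq_zero_iff (two_ne_zero) |>.mp ht2.symm)
    rw [ZMod.euler_criterion p hy2]
    apply hinj
    rw [map_pow, ht2, map_one, ← pow_mul]
    have hcalc : 2 * (p / 2) = p - 1 := by omega
    rw [hcalc]
    have hstep : (h + h⁻¹) ^ (p - 1) * (h + h⁻¹) = 1 * (h + h⁻¹) := by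
      rw [← pow_succ, one_mul]
      have h3 : p - 1 + 1 = p := by omega
      rw [h3, htp]
    exact mul_right_cancel₀ ht0 hstep
  · rintro ⟨u, hu⟩
    set t := (algebraMap (ZMod p) (GaloisField p 2)) u with htdef
    have ht2 : t ^ 2 = ω + ω⁻¹ + 2 := by
      rw [← key, hu, map_mul, sq]
    have ht0 : t ≠ 0 := by
      intro hz
      rw [hz] at ht2
      apply h2
      have h0 : (ω + 1) ^ 2 = 0 := by
        field_simp at ht2
        linear_combination -ht2
      have h0' := pow_eq_zero_iff (two_ne_zero) |>.mp h0
      linear_combination h0'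
    have hne : ω + ω⁻¹ + 2 ≠ 0 := ht2 ▸ pow_ne_zero 2 ht0
    have htp : t ^ p = t := by
      rw [htdef, ← map_pow, ZMod.pow_card]
    have hωp : ω ^ p = ω⁻¹ := by
      have h' : ω ^ p * ω = 1 := by rw [← pow_succ]; exact hω
      field_simp
      linear_combination h'
    have htpp : t ^ (p + 1) = t ^ 2 := by rw [pow_succ, htp, sq]
    have hωpp : (ω + 1) ^ (p + 1) = (ω⁻¹ + 1) * (ω + 1) := by
      rw [pow_succ, add_pow_char, one_pow, hωp]
    refine ⟨(ω + 1) * t⁻¹, ?_, ?_⟩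
    · rw [mul_pow, inv_pow, htpp, hωpp, ht2]
      have hexp : (ω⁻¹ + 1) * (ω + 1) = ω + ω⁻¹ + 2 := by
        field_simp
        ring
      rw [hexp, mul_inv_cancel₀ hne]
    · have hsq : (ω + 1) ^ 2 = ω * (ω + ω⁻¹ + 2) := by
        field_simp
        ring
      rw [mul_pow, inv_pow, ht2, hsq]
      exact (mul_inv_cancel_right₀ hne ω).symm
end

section
/- Let σ ∈ Sym(m) act on the set of k-subsets of {1,...,m} with 2 ≤ k ≤ m/4. If the induced permutation on k-subsets has a cycle of length divisible by a prime q and a cycle of length divisible by a distinct prime s, then it also has a cycle of length divisible by q·s. -/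
lemma bezout_nat (r c : ℕ) (hr : 0 < r) (hrc : r < c) :
    ∃ a : ℕ, a * r % c = Nat.gcd r c := by
  have hc : 0 < c := lt_trans hr hrc
  have hcz : (c : ℤ) ≠ 0 := by exact_mod_cast hc.ne'
  set A := Nat.gcdA r c with hA
  refine ⟨(A % c).toNat, ?_⟩
  have h0 : ((A % c).toNat : ℤ) = A % c :=
    Int.toNat_of_nonneg (Int.emod_nonneg A hcz)
  have h1 : ((A % c).toNat : ℤ) ≡ A [ZMOD c] := by
    rw [Int.ModEq, h0, Int.emod_emod_of_dvd _ dvd_rfl]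
  have h2 : (((A % c).toNat * r : ℕ) : ℤ) ≡ A * r [ZMOD c] := by
    push_cast
    exact h1.mul_right r
  have h3 : (A * r : ℤ) ≡ (Nat.gcd r c : ℤ) [ZMOD c] := by
    rw [Int.modEq_iff_dvd]
    refine ⟨Nat.gcdB r c, ?_⟩
    have := Nat.gcd_eq_gcd_ab r c
    linarith [this]
  have h4 := h2.trans h3
  rw [Int.ModEq] at h4
  have hglt : Nat.gcd r c < c := lt_of_le_of_lt (Nat.le_of_dvd hr (Nat.gcd_dvd_left r c)) hrc
  have hgmod : ((Nat.gcd r c : ℕ) : ℤ) % (c : ℤ) = ((Nat.gcd r c : ℕ) : ℤ) :=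
    Int.emod_eq_of_lt (by positivity) (by exact_mod_cast hglt)
  rw [hgmod] at h4
  have h5 : (((A % c).toNat * r % c : ℕ) : ℤ) = ((Nat.gcd r c : ℕ) : ℤ) := by
    rw [Int.natCast_mod]; exact_mod_cast h4
  exact_mod_cast h5

/-- An "interval pattern" mod `c` invariant under shift by `n` forces `c ∣ n`. -/
lemma interval_rot (c t n : ℕ) (ht : 1 ≤ t) (htc : t < c)
    (H : ∀ i : ℕ, (i + n) % c < t ↔ i % c < t) : c ∣ n := by
  have hc : 0 < c := lt_trans (by omega) htc
  rcases Nat.eq_zero_or_pos (n % c) with h0 | hr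
  · exact Nat.dvd_of_mod_eq_zero h0
  exfalso
  have Hr : ∀ i : ℕ, (i + n % c) % c < t ↔ i % c < t := by
    intro i; rw [Nat.add_mod_mod]; exact H i
  have hrc : n % c < c := Nat.mod_lt _ hc
  obtain ⟨a, hag⟩ := bezout_nat (n % c) c hr hrc
  have hg1 : 1 ≤ Nat.gcd (n % c) c := Nat.gcd_pos_of_pos_left _ hr
  have hgc : Nat.gcd (n % c) c ∣ c := Nat.gcd_dvd_right _ c
  have hgr : Nat.gcd (n % c) c ≤ n % c := Nat.le_of_dvd hr (Nat.gcd_dvd_left _ c)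
  have Hmul : ∀ b i : ℕ, (i + b * (n % c)) % c < t ↔ i % c < t := by
    intro b
    induction b with
    | zero => simp
    | succ b ih =>
      intro i
      have he : i + (b + 1) * (n % c) = (i + (n % c)) + b * (n % c) := by ring
      rw [he, ih (i + (n % c)), Hr i]
  obtain ⟨g, hG1, hGc, hGlt, HG⟩ :
      ∃ g : ℕ, 1 ≤ g ∧ g ∣ c ∧ g < c ∧ ∀ i : ℕ, (i + g) % c < t ↔ i % c < t := by
    refine ⟨Nat.gcd (n % c) c, hg1, hgc, lt_of_le_of_lt hgr hrc, fun i => ?_⟩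
    have h6 := Hmul a i
    rwa [Nat.add_mod, hag, Nat.mod_add_mod] at h6
  clear Hr Hmul hag hg1 hgc hgr hr hrc H
  have Hj : ∀ j : ℕ, (j * g) % c < t := by
    intro j
    induction j with
    | zero => simpa using (by omega : 0 < t)
    | succ j ih =>
      have he : (j + 1) * g = j * g + g := by ring
      rw [he, HG (j * g)]; exact ih
  have hgt : t < g := by
    by_contra h
    push_neg at h
    have h1 := (HG (t - g)).mpr
    rw [Nat.sub_add_cancel h, Nat.mod_eq_of_lt htc, Nat.mod_eq_of_lt (by omega)] at h1
    have := h1 (by omega)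
    omega
  obtain ⟨e, he⟩ := hGc
  have he2 : 2 ≤ e := by
    rcases e with _ | _ | e
    · simp at he; omega
    · simp at he; omega
    · omega
  have h5 := Hj (e - 1)
  have heg : (e - 1) * g = c - g := by
    cases e with
    | zero => omega
    | succ e => simp only [he, Nat.succ_sub_one]; ring_nf; omega
  rw [heg, Nat.mod_eq_of_lt (by omega)] at h5
  have h2g : 2 * g ≤ c := by
    calc 2 * g = g * 2 := by ring
    _ ≤ g * e := Nat.mul_le_mul_left g he2
    _ = c := he.symm
  omega

open Function Finset

variable {m : ℕ}

/-- The interval `{x, πx, ..., π^(t-1)x}`. -/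
def cycInt (π : Equiv.Perm (Fin m)) (x : Fin m) (t : ℕ) : Finset (Fin m) :=
  (Finset.range t).image (fun i => (π ^ i) x)

lemma perm_mem_periodicPts (π : Equiv.Perm (Fin m)) (x : Fin m) :
    x ∈ periodicPts ⇑π := by
  refine ⟨orderOf π, orderOf_pos π, ?_⟩
  show (⇑π)^[orderOf π] x = x
  rw [← Equiv.Perm.coe_pow, pow_orderOf_eq_one]
  rfl

lemma perm_minimalPeriod_pos (π : Equiv.Perm (Fin m)) (x : Fin m) :
    0 < minimalPeriod ⇑π x :=
  minimalPeriod_pos_of_mem_periodicPts (perm_mem_periodicPts π x)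

lemma perm_pow_mod (π : Equiv.Perm (Fin m)) (x : Fin m) (n : ℕ) :
    (π ^ (n % minimalPeriod ⇑π x)) x = (π ^ n) x := by
  have h := iterate_mod_minimalPeriod_eq (f := ⇑π) (x := x) (n := n)
  simpa only [← Equiv.Perm.coe_pow] using h

lemma perm_pow_inj (π : Equiv.Perm (Fin m)) (x : Fin m) {i j : ℕ}
    (hi : i < minimalPeriod ⇑π x) (hj : j < minimalPeriod ⇑π x)
    (h : (π ^ i) x = (π ^ j) x) : i = j := by
  refine iterate_injOn_Iio_minimalPeriod (f := ⇑π) (x := x) hi hj ?_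
  simpa only [← Equiv.Perm.coe_pow] using h

lemma mem_cycInt {π : Equiv.Perm (Fin m)} {x : Fin m} {t : ℕ} {z : Fin m} :
    z ∈ cycInt π x t ↔ ∃ i, i < t ∧ (π ^ i) x = z := by
  simp [cycInt, Finset.mem_image, Finset.mem_range]

lemma cycInt_card {π : Equiv.Perm (Fin m)} {x : Fin m} {t : ℕ}
    (ht : t ≤ minimalPeriod ⇑π x) : (cycInt π x t).card = t := by
  rw [cycInt, Finset.card_image_of_injOn, Finset.card_range]
  intro i hi j hj hij
  simp only [Finset.coe_range, Set.mem_Iio] at hi hj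
  exact perm_pow_inj π x (lt_of_lt_of_le hi ht) (lt_of_lt_of_le hj ht) hij

lemma pow_mem_cycInt_iff {π : Equiv.Perm (Fin m)} {x : Fin m} {t : ℕ}
    (ht : t ≤ minimalPeriod ⇑π x) (i : ℕ) :
    (π ^ i) x ∈ cycInt π x t ↔ i % minimalPeriod ⇑π x < t := by
  constructor
  · rintro h
    obtain ⟨j, hj, hji⟩ := mem_cycInt.mp h
    have h2 : (π ^ (i % minimalPeriod ⇑π x)) x = (π ^ j) x := by
      rw [perm_pow_mod, hji]
    have := perm_pow_inj π x
      (Nat.mod_lt _ (perm_minimalPeriod_pos π x)) (lt_of_lt_of_le hj ht) h2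
    omega
  · intro h
    exact mem_cycInt.mpr ⟨i % minimalPeriod ⇑π x, h, perm_pow_mod π x i⟩

lemma pow_mem_cycle (π : Equiv.Perm (Fin m)) (x : Fin m) (i : ℕ) :
    (π ^ i) x ∈ cycInt π x (minimalPeriod ⇑π x) :=
  (pow_mem_cycInt_iff le_rfl i).mpr (Nat.mod_lt _ (perm_minimalPeriod_pos π x))

lemma cycle_image_inv (π : Equiv.Perm (Fin m)) (x : Fin m) (n : ℕ) :
    (cycInt π x (minimalPeriod ⇑π x)).image ⇑(π ^ n)
      = cycInt π x (minimalPeriod ⇑π x) := by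
  apply Finset.eq_of_subset_of_card_le
  · intro z hz
    obtain ⟨w, hw, hwz⟩ := Finset.mem_image.mp hz
    obtain ⟨i, _, hiw⟩ := mem_cycInt.mp hw
    have : (π ^ (n + i)) x = z := by
      rw [pow_add, Equiv.Perm.mul_apply, hiw, hwz]
    exact this ▸ pow_mem_cycle π x (n + i)
  · rw [Finset.card_image_of_injective _ (π ^ n).injective]

lemma cycInt_subset_cycle {π : Equiv.Perm (Fin m)} {x : Fin m} {t : ℕ}
    (ht : t ≤ minimalPeriod ⇑π x) :
    cycInt π x t ⊆ cycInt π x (minimalPeriod ⇑π x) :=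
  Finset.image_subset_image (by simpa using Finset.range_subset_range.mpr ht)

lemma cycInt_pow_invariant_dvd {π : Equiv.Perm (Fin m)} {x : Fin m} {t n : ℕ}
    (ht : 1 ≤ t) (htc : t < minimalPeriod ⇑π x)
    (h : (cycInt π x t).image ⇑(π ^ n) = cycInt π x t) :
    minimalPeriod ⇑π x ∣ n := by
  set c := minimalPeriod ⇑π x with hc
  apply interval_rot c t n ht htc
  intro i
  have h1 : (π ^ (i + n)) x ∈ cycInt π x t ↔ (π ^ i) x ∈ cycInt π x t := by
    constructor
    · intro hmem
      rw [← h] at hmem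
      obtain ⟨w, hw, hwz⟩ := Finset.mem_image.mp hmem
      have : (π ^ n) ((π ^ i) x) = (π ^ (i + n)) x := by
        rw [add_comm, pow_add, Equiv.Perm.mul_apply]
      rw [← this] at hwz
      rwa [(π ^ n).injective hwz] at hw
    · intro hmem
      rw [← h]
      refine Finset.mem_image.mpr ⟨(π ^ i) x, hmem, ?_⟩
      rw [add_comm, pow_add, Equiv.Perm.mul_apply]
  rw [pow_mem_cycInt_iff htc.le, pow_mem_cycInt_iff htc.le] at h1
  exact h1

lemma mem_cycle_of_inter {π : Equiv.Perm (Fin m)} {x y : Fin m}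
    (h : ¬ Disjoint (cycInt π x (minimalPeriod ⇑π x))
      (cycInt π y (minimalPeriod ⇑π y))) :
    y ∈ cycInt π x (minimalPeriod ⇑π x) := by
  obtain ⟨z, hz⟩ := Finset.not_disjoint_iff.mp h
  obtain ⟨i, _, hix⟩ := mem_cycInt.mp hz.1
  obtain ⟨j, _, hjy⟩ := mem_cycInt.mp hz.2
  have ho : 1 ≤ orderOf π := orderOf_pos π
  have hy : (π ^ (j * (orderOf π - 1))) z = y := by
    rw [← hjy, ← Equiv.Perm.mul_apply, ← pow_add]
    have he : j * (orderOf π - 1) + j = j * orderOf π := by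
      rcases horder : orderOf π with _ | o
      · omega
      · simp [Nat.mul_succ]
    rw [he, mul_comm, pow_mul, pow_orderOf_eq_one, one_pow, Equiv.Perm.one_apply]
  have : (π ^ (j * (orderOf π - 1) + i)) x = y := by
    rw [pow_add, Equiv.Perm.mul_apply, hix, hy]
  exact this ▸ pow_mem_cycle π x _

/-- The permutation induced on `k`-subsets of `Fin m` by a permutation of `Fin m`. -/
def inducedSubsetsPerm (m k : ℕ) (π : Equiv.Perm (Fin m)) :
    Equiv.Perm {s : Finset (Fin m) // s.card = k} :=
  Equiv.Perm.subtypePerm (π.finsetCongr) (fun s => by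
    simp [Equiv.finsetCongr_apply, Finset.card_map])

lemma inducedSubsetsPerm_pow_val (m k : ℕ) (π : Equiv.Perm (Fin m)) (n : ℕ)
    (a : {s : Finset (Fin m) // s.card = k}) :
    ((inducedSubsetsPerm m k π ^ n) a).val = a.val.image ⇑(π ^ n) := by
  induction n generalizing a with
  | zero => simp
  | succ n ih =>
    rw [pow_succ, Equiv.Perm.mul_apply]
    have h1 : (inducedSubsetsPerm m k π a).val = a.val.image ⇑π := by
      show ((π.finsetCongr) a.val) = _
      rw [Equiv.finsetCongr_apply, Finset.map_eq_image]
      rfl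
    have h2 : ⇑(π ^ (n + 1)) = ⇑(π ^ n) ∘ ⇑π := by rw [pow_succ]; rfl
    rw [ih (inducedSubsetsPerm m k π a), h1, Finset.image_image, ← h2]

lemma prime_dvd_finset_lcm {α : Type*} {p : ℕ} (hp : p.Prime) {s : Finset α} {f : α → ℕ}
    (h : p ∣ s.lcm f) : ∃ z ∈ s, p ∣ f z := by
  classical
  induction s using Finset.induction_on with
  | empty =>
    rw [Finset.lcm_empty] at h
    exact absurd (Nat.le_of_dvd one_pos h) (by have := hp.one_lt; omega)
  | insert a s hnotmem ih =>
    rw [Finset.lcm_insert] at h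
    have hd : lcm (f a) (s.lcm f) ∣ f a * s.lcm f :=
      lcm_dvd (dvd_mul_right _ _) (dvd_mul_left _ _)
    rcases (Nat.Prime.dvd_mul hp).mp (h.trans hd) with h1 | h1
    · exact ⟨a, Finset.mem_insert_self a s, h1⟩
    · obtain ⟨z, hz, hz2⟩ := ih h1
      exact ⟨z, Finset.mem_insert_of_mem hz, hz2⟩

lemma exists_point_dvd (m k : ℕ) (π : Equiv.Perm (Fin m)) {p : ℕ} (hp : p.Prime)
    (a : {s : Finset (Fin m) // s.card = k})
    (ha : p ∣ Function.minimalPeriod (⇑(inducedSubsetsPerm m k π)) a) :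
    ∃ x : Fin m, p ∣ Function.minimalPeriod ⇑π x := by
  set L := a.val.lcm (fun z => Function.minimalPeriod ⇑π z) with hL
  have hfix : ∀ z ∈ a.val, (π ^ L) z = z := by
    intro z hz
    have h1 : Function.minimalPeriod ⇑π z ∣ L := Finset.dvd_lcm hz
    have h2 : Function.IsPeriodicPt ⇑π L z :=
      (Function.isPeriodicPt_iff_minimalPeriod_dvd).mpr h1
    have := h2
    rw [Function.IsPeriodicPt, Function.IsFixedPt, ← Equiv.Perm.coe_pow] at this
    exact this
  have hGa : ((inducedSubsetsPerm m k π) ^ L) a = a := by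
    apply Subtype.ext
    rw [inducedSubsetsPerm_pow_val]
    rw [Finset.image_congr (g := id) (fun z hz => hfix z hz)]
    exact Finset.image_id
  have hdvd : Function.minimalPeriod (⇑(inducedSubsetsPerm m k π)) a ∣ L := by
    apply (Function.isPeriodicPt_iff_minimalPeriod_dvd).mp
    rw [Function.IsPeriodicPt, Function.IsFixedPt, ← Equiv.Perm.coe_pow, hGa]
  obtain ⟨z, _, hz⟩ := prime_dvd_finset_lcm hp (ha.trans hdvd)
  exact ⟨z, hz⟩

lemma piece_dvd_period (m k : ℕ) (π : Equiv.Perm (Fin m)) (x : Fin m) (t : ℕ)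
    (ht1 : 1 ≤ t) (htc : t < Function.minimalPeriod ⇑π x)
    (S : Finset (Fin m)) (hcard : S.card = k)
    (hSx : S ∩ cycInt π x (Function.minimalPeriod ⇑π x) = cycInt π x t) :
    Function.minimalPeriod ⇑π x
      ∣ Function.minimalPeriod (⇑(inducedSubsetsPerm m k π)) ⟨S, hcard⟩ := by
  set n := Function.minimalPeriod (⇑(inducedSubsetsPerm m k π)) ⟨S, hcard⟩ with hn
  have hfix : ((inducedSubsetsPerm m k π) ^ n) ⟨S, hcard⟩ = ⟨S, hcard⟩ := by
    have := Function.iterate_minimalPeriod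
      (f := ⇑(inducedSubsetsPerm m k π)) (x := (⟨S, hcard⟩ : {s : Finset (Fin m) // s.card = k}))
    rwa [← Equiv.Perm.coe_pow] at this
  have hS : S.image ⇑(π ^ n) = S := by
    have := congrArg Subtype.val hfix
    rwa [inducedSubsetsPerm_pow_val] at this
  have hO := cycle_image_inv π x n
  have hP : (cycInt π x t).image ⇑(π ^ n) = cycInt π x t := by
    rw [← hSx, Finset.image_inter _ _ (π ^ n).injective, hS, hO]
  exact cycInt_pow_invariant_dvd ht1 htc hP

theorem induced_perm_cycle_divisible (m k : ℕ) (hk2 : 2 ≤ k) (hkm : 4 * k ≤ m)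
    (π : Equiv.Perm (Fin m)) (q s : ℕ) (hq : q.Prime) (hs : s.Prime) (hqs : q ≠ s)
    (a b : {t : Finset (Fin m) // t.card = k})
    (ha : q ∣ Function.minimalPeriod (⇑(inducedSubsetsPerm m k π)) a)
    (hb : s ∣ Function.minimalPeriod (⇑(inducedSubsetsPerm m k π)) b) :
    ∃ c : {t : Finset (Fin m) // t.card = k},
      q * s ∣ Function.minimalPeriod (⇑(inducedSubsetsPerm m k π)) c := by
  classical
  obtain ⟨x, hqx⟩ := exists_point_dvd m k π hq a ha
  obtain ⟨y, hsy⟩ := exists_point_dvd m k π hs b hb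
  set c1 := Function.minimalPeriod ⇑π x with hc1
  set c2 := Function.minimalPeriod ⇑π y with hc2
  have hc1pos : 0 < c1 := perm_minimalPeriod_pos π x
  have hc2pos : 0 < c2 := perm_minimalPeriod_pos π y
  have hc1ge : 2 ≤ c1 := le_trans hq.two_le (Nat.le_of_dvd hc1pos hqx)
  have hc2ge : 2 ≤ c2 := le_trans hs.two_le (Nat.le_of_dvd hc2pos hsy)
  have hcop : Nat.Coprime q s := (Nat.coprime_primes hq hs).mpr hqs
  have hcardO1 : (cycInt π x c1).card = c1 := cycInt_card le_rfl
  have hcardO2 : (cycInt π y c2).card = c2 := cycInt_card le_rfl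
  have hm8 : 8 ≤ m := by omega
  by_cases hy : y ∈ cycInt π x c1
  · -- same cycle
    obtain ⟨i, _, hix⟩ := mem_cycInt.mp hy
    have hc12 : c2 = c1 := by
      rw [hc2, ← hix]
      have := Function.minimalPeriod_apply_iterate (perm_mem_periodicPts π x) i
      rwa [← Equiv.Perm.coe_pow] at this
    have hqs1 : q * s ∣ c1 :=
      hcop.mul_dvd_of_dvd_of_dvd hqx (hc12 ▸ hsy)
    by_cases hk : k < c1
    · -- interval of length k fits in the cycle
      refine ⟨⟨cycInt π x k, cycInt_card hk.le⟩, ?_⟩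
      refine hqs1.trans (piece_dvd_period m k π x k (by omega) hk _ _ ?_)
      exact Finset.inter_eq_left.mpr (cycInt_subset_cycle hk.le)
    · -- cycle is short: interval of length c1 - 1 plus junk outside
      push_neg at hk
      have hR : k - (c1 - 1) ≤ (Finset.univ \ cycInt π x c1).card := by
        rw [Finset.card_sdiff_of_subset (Finset.subset_univ _), hcardO1, Finset.card_univ,
          Fintype.card_fin]
        omega
      obtain ⟨J, hJsub, hJcard⟩ := Finset.exists_subset_card_eq hR
      have hJdisj : Disjoint J (cycInt π x c1) :=
        (Finset.subset_sdiff.mp hJsub).2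
      have hPsub : cycInt π x (c1 - 1) ⊆ cycInt π x c1 :=
        cycInt_subset_cycle (by omega)
      have hPJ : Disjoint (cycInt π x (c1 - 1)) J :=
        (Finset.disjoint_of_subset_left hPsub hJdisj.symm)
      have hcard : (cycInt π x (c1 - 1) ∪ J).card = k := by
        rw [Finset.card_union_of_disjoint hPJ, cycInt_card (by omega), hJcard]
        omega
      refine ⟨⟨_, hcard⟩, ?_⟩
      refine hqs1.trans (piece_dvd_period m k π x (c1 - 1) (by omega) (by omega) _ _ ?_)
      rw [Finset.union_inter_distrib_right,
        Finset.inter_eq_left.mpr hPsub,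
        Finset.disjoint_iff_inter_eq_empty.mp hJdisj, Finset.union_empty]
  · -- different cycles
    have hdisj : Disjoint (cycInt π x c1) (cycInt π y c2) := by
      by_contra h
      exact hy (mem_cycle_of_inter h)
    set t1 := min (c1 - 1) (k - 1) with ht1def
    set t2 := min (c2 - 1) (k - t1) with ht2def
    have ht1a : 1 ≤ t1 := by omega
    have ht1b : t1 < c1 := by omega
    have ht1c : t1 ≤ k - 1 := by omega
    have ht2a : 1 ≤ t2 := by omega
    have ht2b : t2 < c2 := by omega
    have ht2c : t2 ≤ k - t1 := by omega
    have hsum : c1 + c2 ≤ m := by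
      have := Finset.card_le_univ (cycInt π x c1 ∪ cycInt π y c2)
      rwa [Finset.card_union_of_disjoint hdisj, hcardO1, hcardO2,
        Fintype.card_fin] at this
    have hR : k - t1 - t2 ≤ (Finset.univ \ (cycInt π x c1 ∪ cycInt π y c2)).card := by
      rw [Finset.card_sdiff_of_subset (Finset.subset_univ _),
        Finset.card_union_of_disjoint hdisj, hcardO1, hcardO2, Finset.card_univ,
        Fintype.card_fin]
      omega
    obtain ⟨J, hJsub, hJcard⟩ := Finset.exists_subset_card_eq hR
    have hJdisj : Disjoint J (cycInt π x c1 ∪ cycInt π y c2) :=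
      (Finset.subset_sdiff.mp hJsub).2
    have hJ1 : Disjoint J (cycInt π x c1) :=
      hJdisj.mono_right Finset.subset_union_left
    have hJ2 : Disjoint J (cycInt π y c2) :=
      hJdisj.mono_right Finset.subset_union_right
    have hP1sub : cycInt π x t1 ⊆ cycInt π x c1 := cycInt_subset_cycle ht1b.le
    have hP2sub : cycInt π y t2 ⊆ cycInt π y c2 := cycInt_subset_cycle ht2b.le
    have hP1P2 : Disjoint (cycInt π x t1) (cycInt π y t2) :=
      Finset.disjoint_of_subset_left hP1sub (Finset.disjoint_of_subset_right hP2sub hdisj)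
    have hP1J : Disjoint (cycInt π x t1) J :=
      Finset.disjoint_of_subset_left hP1sub hJ1.symm
    have hP2J : Disjoint (cycInt π y t2) J :=
      Finset.disjoint_of_subset_left hP2sub hJ2.symm
    have hcard : (cycInt π x t1 ∪ cycInt π y t2 ∪ J).card = k := by
      rw [Finset.card_union_of_disjoint (Finset.disjoint_union_left.mpr ⟨hP1J, hP2J⟩),
        Finset.card_union_of_disjoint hP1P2, cycInt_card ht1b.le, cycInt_card ht2b.le,
        hJcard]
      omega
    refine ⟨⟨_, hcard⟩, ?_⟩
    have hdvd1 : c1 ∣ Function.minimalPeriod (⇑(inducedSubsetsPerm m k π))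
        ⟨cycInt π x t1 ∪ cycInt π y t2 ∪ J, hcard⟩ := by
      refine piece_dvd_period m k π x t1 ht1a ht1b _ _ ?_
      rw [Finset.union_inter_distrib_right, Finset.union_inter_distrib_right,
        Finset.inter_eq_left.mpr hP1sub,
        Finset.disjoint_iff_inter_eq_empty.mp
          (Finset.disjoint_of_subset_left hP2sub hdisj.symm),
        Finset.disjoint_iff_inter_eq_empty.mp hJ1,
        Finset.union_empty, Finset.union_empty]
    have hdvd2 : c2 ∣ Function.minimalPeriod (⇑(inducedSubsetsPerm m k π))
        ⟨cycInt π x t1 ∪ cycInt π y t2 ∪ J, hcard⟩ := by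
      refine piece_dvd_period m k π y t2 ht2a ht2b _ _ ?_
      rw [Finset.union_inter_distrib_right, Finset.union_inter_distrib_right,
        Finset.inter_eq_left.mpr hP2sub,
        Finset.disjoint_iff_inter_eq_empty.mp
          (Finset.disjoint_of_subset_left hP1sub hdisj),
        Finset.disjoint_iff_inter_eq_empty.mp hJ2,
        Finset.empty_union, Finset.union_empty]
    exact hcop.mul_dvd_of_dvd_of_dvd (hqx.trans hdvd1) (hsy.trans hdvd2)
end
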